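/- arXiv:1505.03067 — 16 statements merged into one kernel-verified Lean document; each statement's English description precedes it below -/
import Mathlib

section
/- Let x : ℤ × ℤ × ℤ → ℝ, written x_{n,l}^m, satisfy the Hirota–Miwa equation x_{n+1,l}^{m+1} x_{n,l+1}^m = x_{n,l+1}^{m+1} x_{n+1,l}^m + x_{n,l}^{m+1} x_{n+1,l+1}^m for all n, m, l ∈ ℤ, together with the reduction condition x_{n,l+2}^m = x_{n,l}^m for all n, m, l ∈ ℤ. Define w_n^m := x_{n,0}^m and x_n^m := x_{n,1}^m. Then for all n, m ∈ ℤ the bilinear discrete mKdV system holds: w_{n+1}^{m+1} x_n^m = x_n^{m+1} w_{n+1}^m + w_n^{m+1} x_{n+1}^m and x_{n+1}^{m+1} w_n^m = w_n^{m+1} x_{n+1}^m + x_n^{m+1} w_{n+1}^m. -/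
/-- (0,0,2)-reduction of the Hirota–Miwa equation yields the bilinear
discrete mKdV system.  Here `x (n, l, m)` denotes `x_{n,l}^m`, and we set
`w_n^m := x_{n,0}^m`, `x_n^m := x_{n,1}^m`. -/
theorem hirota_miwa_reduction_dmKdV
    (x : ℤ × ℤ × ℤ → ℝ)
    (hHM : ∀ n m l : ℤ,
      x (n + 1, l, m + 1) * x (n, l + 1, m) =
        x (n, l + 1, m + 1) * x (n + 1, l, m) + x (n, l, m + 1) * x (n + 1, l + 1, m))
    (hred : ∀ n m l : ℤ, x (n, l + 2, m) = x (n, l, m)) :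
    ∀ n m : ℤ,
      (x (n + 1, 0, m + 1) * x (n, 1, m) =
        x (n, 1, m + 1) * x (n + 1, 0, m) + x (n, 0, m + 1) * x (n + 1, 1, m)) ∧
      (x (n + 1, 1, m + 1) * x (n, 0, m) =
        x (n, 0, m + 1) * x (n + 1, 1, m) + x (n, 1, m + 1) * x (n + 1, 0, m)) := by
  intro n m
  refine ⟨by simpa using hHM n m 0, ?_⟩
  have h := hHM n m 1
  have h1 : x (n, (2:ℤ), m) = x (n, 0, m) := by simpa using hred n m 0
  have h2 : x (n, (2:ℤ), m + 1) = x (n, 0, m + 1) := by simpa using hred n (m+1) 0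
  have h3 : x (n + 1, (2:ℤ), m) = x (n + 1, 0, m) := by simpa using hred (n+1) m 0
  norm_num [h1, h2, h3] at h
  linarith
end

section
/- Let x : ℤ × ℤ → ℝ, written x_n^m, satisfy the bilinear discrete KdV equation x_{n+1}^{m+1} x_{n-1}^m = x_{n-1}^{m+1} x_{n+1}^m + x_n^{m+1} x_n^m for all n, m ∈ ℤ, together with the reduction condition x_{n+2}^{m-1} = x_n^m for all n, m ∈ ℤ. Define x_n := x_n^0. Then for all n ∈ ℤ, x_{n+4} x_n = x_{n+2}^2 + x_{n+3} x_{n+1} (the bilinear form of the q-Painlevé I equation). -/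
/-- (2,-1)-reduction of the bilinear discrete KdV equation yields the
bilinear form of the q-Painlevé I equation.  Here `x (n, m)` denotes `x_n^m`. -/
theorem dKdV_reduction_qPI
    (x : ℤ × ℤ → ℝ)
    (hKdV : ∀ n m : ℤ,
      x (n + 1, m + 1) * x (n - 1, m) =
        x (n - 1, m + 1) * x (n + 1, m) + x (n, m + 1) * x (n, m))
    (hred : ∀ n m : ℤ, x (n + 2, m - 1) = x (n, m)) :
    ∀ n : ℤ,
      x (n + 4, 0) * x (n, 0) = (x (n + 2, 0)) ^ 2 + x (n + 3, 0) * x (n + 1, 0) := by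
  intro n
  have h := hKdV (n + 3) (-1)
  have h1 := hred n 0
  have h2 := hred (n + 2) 0
  have h3 := hred (n + 1) 0
  norm_num at h h1 h2 h3
  rw [show n + 3 + 1 = n + 4 by ring, show n + 3 - 1 = n + 2 by ring] at h
  rw [show n+2+2 = n+4 by ring] at h2
  rw [show n+1+2 = n+3 by ring] at h3
  rw [h2, h3] at h
  rw [h1] at h
  rw [h, sq]
end

section
/- Let x : ℤ × ℤ → ℝ, written x_n^m, satisfy the bilinear discrete KdV equation x_{n+1}^{m+1} x_{n-1}^m = x_{n-1}^{m+1} x_{n+1}^m + x_n^{m+1} x_n^m for all n, m ∈ ℤ, together with the reduction condition x_{n+3}^{m-1} = x_n^m for all n, m ∈ ℤ. Define x_n := x_n^0. Then for all n ∈ ℤ, x_{n+5} x_n = x_{n+3} x_{n+2} + x_{n+4} x_{n+1} (the bilinear form of the q-Painlevé II equation). -/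
/-- (3,-1)-reduction of the bilinear discrete KdV equation yields the
bilinear form of the q-Painlevé II equation.  Here `x (n, m)` denotes `x_n^m`. -/
theorem dKdV_reduction_qPII
    (x : ℤ × ℤ → ℝ)
    (hKdV : ∀ n m : ℤ,
      x (n + 1, m + 1) * x (n - 1, m) =
        x (n - 1, m + 1) * x (n + 1, m) + x (n, m + 1) * x (n, m))
    (hred : ∀ n m : ℤ, x (n + 3, m - 1) = x (n, m)) :
    ∀ n : ℤ,
      x (n + 5, 0) * x (n, 0) =
        x (n + 3, 0) * x (n + 2, 0) + x (n + 4, 0) * x (n + 1, 0) := by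
  intro n
  have h := hKdV (n + 1) 0
  have r1 := hred (n + 2) 1
  have r2 := hred n 1
  have r3 := hred (n + 1) 1
  norm_num at h r1 r2 r3
  rw [show n + 1 + 1 = n + 2 by ring, ← r1, ← r2, ← r3, show n + 2 + 3 = n + 5 by ring, show n + 1 + 3 = n + 4 by ring] at h
  linarith [h]
end

section
/- Let w, x : ℤ × ℤ → ℝ, written w_n^m, x_n^m, satisfy the bilinear discrete mKdV system w_{n+1}^{m+1} x_n^m = x_n^{m+1} w_{n+1}^m + w_n^{m+1} x_{n+1}^m and x_{n+1}^{m+1} w_n^m = w_n^{m+1} x_{n+1}^m + x_n^{m+1} w_{n+1}^m for all n, m ∈ ℤ, together with the reduction conditions w_{n+2}^{m-1} = w_n^m and x_{n+2}^{m-1} = x_n^m for all n, m ∈ ℤ. Define w_n := w_n^0 and x_n := x_n^0. Then for all n ∈ ℤ, w_{n+3} x_n = x_{n+2} w_{n+1} + w_{n+2} x_{n+1} and x_{n+3} w_n = w_{n+2} x_{n+1} + x_{n+2} w_{n+1} (the bilinear form of the q-Painlevé III equation). -/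
/-- (2,-1)-reduction of the bilinear discrete mKdV system yields the
bilinear form of the q-Painlevé III equation.  Here `w (n, m)`, `x (n, m)`
denote `w_n^m`, `x_n^m`. -/
theorem dmKdV_reduction_qPIII
    (w x : ℤ × ℤ → ℝ)
    (hmKdV₁ : ∀ n m : ℤ,
      w (n + 1, m + 1) * x (n, m) =
        x (n, m + 1) * w (n + 1, m) + w (n, m + 1) * x (n + 1, m))
    (hmKdV₂ : ∀ n m : ℤ,
      x (n + 1, m + 1) * w (n, m) =
        w (n, m + 1) * x (n + 1, m) + x (n, m + 1) * w (n + 1, m))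
    (hredw : ∀ n m : ℤ, w (n + 2, m - 1) = w (n, m))
    (hredx : ∀ n m : ℤ, x (n + 2, m - 1) = x (n, m)) :
    ∀ n : ℤ,
      (w (n + 3, 0) * x (n, 0) =
        x (n + 2, 0) * w (n + 1, 0) + w (n + 2, 0) * x (n + 1, 0)) ∧
      (x (n + 3, 0) * w (n, 0) =
        w (n + 2, 0) * x (n + 1, 0) + x (n + 2, 0) * w (n + 1, 0)) := by
  intro n
  have h1 : w (n + 1, 1) = w (n + 3, 0) := by
    have := hredw (n + 1) 1
    norm_num at this
    rw [← this]; ring_nf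
  have h2 : x (n + 1, 1) = x (n + 3, 0) := by
    have := hredx (n + 1) 1
    norm_num at this
    rw [← this]; ring_nf
  have h3 : w (n, 1) = w (n + 2, 0) := by
    have := hredw n 1
    norm_num at this
    rw [← this]
  have h4 : x (n, 1) = x (n + 2, 0) := by
    have := hredx n 1
    norm_num at this
    rw [← this]
  constructor
  · have := hmKdV₁ n 0
    norm_num at this
    rw [h1, h3, h4] at this
    linarith
  · have := hmKdV₂ n 0
    norm_num at this
    rw [h2, h3, h4] at this
    linarith
end

section
/- Let w, x : ℤ × ℤ → ℝ, written w_n^m, x_n^m, satisfy the bilinear discrete mKdV system w_{n+1}^{m+1} x_n^m = x_n^{m+1} w_{n+1}^m + w_n^{m+1} x_{n+1}^m and x_{n+1}^{m+1} w_n^m = w_n^{m+1} x_{n+1}^m + x_n^{m+1} w_{n+1}^m for all n, m ∈ ℤ, together with the reduction conditions w_{n+2}^{m-2} = w_n^m and x_{n+2}^{m-2} = x_n^m for all n, m ∈ ℤ. Define w_n := w_n^0, x_n := x_n^0, W_n := w_{n-1}^1, X_n := x_{n-1}^1. Then for all n ∈ ℤ the following four equations hold (the bilinear form of the q-Painlevé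 VI equation): w_{n+2} X_n = x_{n+1} W_{n+1} + w_{n+1} X_{n+1}, x_{n+2} W_n = w_{n+1} X_{n+1} + x_{n+1} W_{n+1}, W_{n+2} x_n = X_{n+1} w_{n+1} + W_{n+1} x_{n+1}, and X_{n+2} w_n = W_{n+1} x_{n+1} + X_{n+1} w_{n+1}. -/
/-- (2,-2)-reduction of the bilinear discrete mKdV system yields the
bilinear form of the q-Painlevé VI equation.  Here `w (n, m)`, `x (n, m)`
denote `w_n^m`, `x_n^m`, and we set `w_n := w_n^0`, `x_n := x_n^0`,
`W_n := w_{n-1}^1`, `X_n := x_{n-1}^1`. -/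
theorem dmKdV_reduction_qPVI
    (w x : ℤ × ℤ → ℝ)
    (hmKdV₁ : ∀ n m : ℤ,
      w (n + 1, m + 1) * x (n, m) =
        x (n, m + 1) * w (n + 1, m) + w (n, m + 1) * x (n + 1, m))
    (hmKdV₂ : ∀ n m : ℤ,
      x (n + 1, m + 1) * w (n, m) =
        w (n, m + 1) * x (n + 1, m) + x (n, m + 1) * w (n + 1, m))
    (hredw : ∀ n m : ℤ, w (n + 2, m - 2) = w (n, m))
    (hredx : ∀ n m : ℤ, x (n + 2, m - 2) = x (n, m)) :
    ∀ n : ℤ,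
      (w (n + 2, 0) * x (n - 1, 1) =
        x (n + 1, 0) * w (n, 1) + w (n + 1, 0) * x (n, 1)) ∧
      (x (n + 2, 0) * w (n - 1, 1) =
        w (n + 1, 0) * x (n, 1) + x (n + 1, 0) * w (n, 1)) ∧
      (w (n + 1, 1) * x (n, 0) =
        x (n, 1) * w (n + 1, 0) + w (n, 1) * x (n + 1, 0)) ∧
      (x (n + 1, 1) * w (n, 0) =
        w (n, 1) * x (n + 1, 0) + x (n, 1) * w (n + 1, 0)) := by
  intro n
  have e1 := hredw n 2
  have e2 := hredx (n - 1) 2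
  have e3 := hredw (n - 1) 2
  have e4 := hredx n 2
  norm_num at e1 e2 e3 e4
  rw [show n - 1 + 2 = n + 1 by ring] at e2 e3
  have h1 := hmKdV₁ (n - 1) 1
  have h2 := hmKdV₂ (n - 1) 1
  rw [show n - 1 + 1 = n by ring, show (1 : ℤ) + 1 = 2 by ring] at h1 h2
  refine ⟨?_, ?_, hmKdV₁ n 0, hmKdV₂ n 0⟩
  · rw [e1, h1, e2, e3]
  · rw [e4, h2, e2, e3]
end

section
/- Let x : ℤ → ℝ be a sequence of positive reals satisfying x_{n+4} x_n = x_{n+2}^2 + x_{n+3} x_{n+1} for all n ∈ ℤ. Define y_n := x_{n+2} x_n / x_{n+1}^2. Then y satisfies the q-Painlevé I recurrence: for all n ∈ ℤ, y_{n+4} y_n (1/y_{n+2} + 1)^2 = (y_{n+3} + 1)(y_{n+1} + 1). -/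
/-! Writing `y n = x (n+2) x n / x (n+1)²`, the bilinear equation turns both `y (n+1) + 1` and
`1 / y (n+1) + 1` into monomial ratios of the `x`'s. Substituting these, each side of the q-Painlevé I
recurrence collapses to `x (n+6) x n / (x (n+4) x (n+2))`. -/

section

variable {K : Type*} [Field K]

def bilinearRatio (x : ℤ → K) (n : ℤ) : K := x (n + 2) * x n / x (n + 1) ^ 2

variable {x : ℤ → K} {n : ℤ}

theorem bilinearRatio_succ_add_one
    (hbil : x (n + 4) * x n = x (n + 2) ^ 2 + x (n + 3) * x (n + 1)) (h2 : x (n + 2) ≠ 0) :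
    bilinearRatio x (n + 1) + 1 = x (n + 4) * x n / x (n + 2) ^ 2 := by
  rw [bilinearRatio, hbil, show n + 1 + 2 = n + 3 by ring, show n + 1 + 1 = n + 2 by ring]
  field_simp
  ring

theorem one_div_bilinearRatio_succ_add_one
    (hbil : x (n + 4) * x n = x (n + 2) ^ 2 + x (n + 3) * x (n + 1))
    (h1 : x (n + 1) ≠ 0) (h3 : x (n + 3) ≠ 0) :
    1 / bilinearRatio x (n + 1) + 1 = x (n + 4) * x n / (x (n + 3) * x (n + 1)) := by
  rw [bilinearRatio, hbil, show n + 1 + 2 = n + 3 by ring, show n + 1 + 1 = n + 2 by ring]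
  field_simp

end

/-- If positive `x : ℤ → ℝ` satisfies the q-PI bilinear equation, then
`y n := x (n+2) * x n / (x (n+1))^2` satisfies the q-Painlevé I recurrence. -/
theorem qPI_bilinear_to_recurrence
    (x : ℤ → ℝ) (hx : ∀ n : ℤ, 0 < x n)
    (hbil : ∀ n : ℤ, x (n + 4) * x n = (x (n + 2)) ^ 2 + x (n + 3) * x (n + 1))
    (y : ℤ → ℝ) (hy : ∀ n : ℤ, y n = x (n + 2) * x n / (x (n + 1)) ^ 2) :
    ∀ n : ℤ,
      y (n + 4) * y n * (1 / y (n + 2) + 1) ^ 2 = (y (n + 3) + 1) * (y (n + 1) + 1) := by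
  obtain rfl : y = bilinearRatio x := funext hy
  have hne (m : ℤ) : x m ≠ 0 := (hx m).ne'
  intro n
  have hy1 := bilinearRatio_succ_add_one (hbil n) (hne _)
  have hinv2 := one_div_bilinearRatio_succ_add_one (hbil (n + 1)) (hne _) (hne _)
  have hy3 := bilinearRatio_succ_add_one (hbil (n + 2)) (hne _)
  simp only [add_assoc, Int.reduceAdd] at hy1 hinv2 hy3
  rw [hy1, hinv2, hy3, bilinearRatio, bilinearRatio]
  simp only [add_assoc, Int.reduceAdd]
  field_simp [hne]
end

section
/- Let y : ℤ → ℝ be a sequence of positive reals satisfying the q-Painlevé I recurrence y_{n+4} y_n (1/y_{n+2} + 1)^2 = (y_{n+3} + 1)(y_{n+1} + 1) for all n ∈ ℤ. Then the quantity u_n := y_{n+3} (1/y_{n+1} + 1) / (y_n (1/y_{n+2} + 1)) is a conserved quantity, i.e., u_{n+1} = u_n for all n ∈ ℤ. -/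
/-! The ratio `u (n+1) / u n` is, after cancelling, exactly the ratio of the two sides of the
recurrence, so the recurrence says this ratio is `1`. -/

section

variable {K : Type*} [Field K]

def qPIInvariant (y : ℤ → K) (n : ℤ) : K :=
  y (n + 3) * (1 / y (n + 1) + 1) / (y n * (1 / y (n + 2) + 1))

theorem qPIInvariant_succ_mul (y : ℤ → K) (n : ℤ) (h0 : y n ≠ 0) (h1 : y (n + 1) ≠ 0)
    (h3 : y (n + 3) ≠ 0) (h3' : y (n + 3) + 1 ≠ 0) :
    qPIInvariant y (n + 1) * ((y (n + 3) + 1) * (y (n + 1) + 1)) =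
      qPIInvariant y n * (y (n + 4) * y n * (1 / y (n + 2) + 1) ^ 2) := by
  unfold qPIInvariant
  rw [show n + 1 + 3 = n + 4 by ring, show n + 1 + 1 = n + 2 by ring,
    show n + 1 + 2 = n + 3 by ring]
  rw [add_comm] at h3'
  field_simp
  ring

end

/-- For positive solutions of the q-Painlevé I recurrence,
`u n := y (n+3) * (1/y (n+1) + 1) / (y n * (1/y (n+2) + 1))` is conserved. -/
theorem qPI_conserved_u
    (y : ℤ → ℝ) (hy : ∀ n : ℤ, 0 < y n)
    (hrec : ∀ n : ℤ,
      y (n + 4) * y n * (1 / y (n + 2) + 1) ^ 2 = (y (n + 3) + 1) * (y (n + 1) + 1)) :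
    ∀ n : ℤ,
      y (n + 1 + 3) * (1 / y (n + 1 + 1) + 1) / (y (n + 1) * (1 / y (n + 1 + 2) + 1)) =
        y (n + 3) * (1 / y (n + 1) + 1) / (y n * (1 / y (n + 2) + 1)) := by
  intro n
  have hpos : ∀ k, 0 < y k + 1 := fun k => by linarith [hy k]
  have key := qPIInvariant_succ_mul y n (hy n).ne' (hy (n + 1)).ne' (hy (n + 3)).ne'
    (hpos (n + 3)).ne'
  rw [hrec n] at key
  exact mul_right_cancel₀ (mul_pos (hpos (n + 3)) (hpos (n + 1))).ne' key
end

section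
/- Let y : ℤ → ℝ be a sequence of positive reals satisfying the q-Painlevé I recurrence y_{n+4} y_n (1/y_{n+2} + 1)^2 = (y_{n+3} + 1)(y_{n+1} + 1) for all n ∈ ℤ. Define c₁ := y_3 (1/y_1 + 1) / (y_0 (1/y_2 + 1)) and v_n := y_{n+2} y_{n+1}^2 y_n / (y_{n+1} + 1). Then v_{n+1} = c₁ v_n for all n ∈ ℤ. -/
/-! The quantity `v` satisfies `v (n+2) * v n = v (n+1) ^ 2`, which after clearing denominators
is exactly the q-Painlevé I recurrence. Since `v` is positive, this says that the ratio
`v (n+1) / v n` does not depend on `n`, so it equals `v 1 / v 0 = c₁`. -/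

theorem Int.eq_of_apply_add_one_eq {α : Type*} {f : ℤ → α} (hf : ∀ n, f (n + 1) = f n) (n : ℤ) :
    f n = f 0 := by
  induction n using Int.induction_on with
  | zero => rfl
  | succ k ih => rw [hf, ih]
  | pred k ih => rw [← ih, ← hf, sub_add_cancel]

theorem apply_add_one_eq_mul_of_mul_eq_sq {K : Type*} [Field K] {u : ℤ → K} (hu : ∀ n, u n ≠ 0)
    (h : ∀ n, u (n + 2) * u n = u (n + 1) ^ 2) (n : ℤ) : u (n + 1) = u 1 / u 0 * u n := by
  have hratio : ∀ m, u (m + 1 + 1) / u (m + 1) = u (m + 1) / u m := fun m => by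
    rw [div_eq_div_iff (hu _) (hu _), add_assoc, one_add_one_eq_two, h, sq]
  have := Int.eq_of_apply_add_one_eq (f := fun m => u (m + 1) / u m) hratio n
  simp only [zero_add] at this
  rw [← this, div_mul_cancel₀ _ (hu n)]

noncomputable def qPIv (y : ℤ → ℝ) (n : ℤ) : ℝ :=
  y (n + 2) * y (n + 1) ^ 2 * y n / (y (n + 1) + 1)

theorem qPIv_pos {y : ℤ → ℝ} (hy : ∀ n, 0 < y n) (n : ℤ) : 0 < qPIv y n := by
  have := hy n; have := hy (n + 1); have := hy (n + 2)
  unfold qPIv; positivity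

theorem qPIv_add_two_mul_eq_sq {y : ℤ → ℝ} (hy : ∀ n, 0 < y n)
    (hrec : ∀ n : ℤ,
      y (n + 4) * y n * (1 / y (n + 2) + 1) ^ 2 = (y (n + 3) + 1) * (y (n + 1) + 1))
    (n : ℤ) : qPIv y (n + 2) * qPIv y n = qPIv y (n + 1) ^ 2 := by
  have h := hrec n
  have := hy n; have := hy (n + 1); have := hy (n + 2); have := hy (n + 3)
  simp only [qPIv, show n + 2 + 2 = n + 4 by ring, show n + 2 + 1 = n + 3 by ring,
    show n + 1 + 2 = n + 3 by ring, show n + 1 + 1 = n + 2 by ring]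
  field_simp at h ⊢
  linear_combination h

theorem qPIv_one_div_qPIv_zero {y : ℤ → ℝ} (hy : ∀ n, 0 < y n) :
    qPIv y 1 / qPIv y 0 = y 3 * (1 / y 1 + 1) / (y 0 * (1 / y 2 + 1)) := by
  have := hy 0; have := hy 1; have := hy 2
  simp only [qPIv, zero_add, show (1 : ℤ) + 2 = 3 by norm_num,
    show (1 : ℤ) + 1 = 2 by norm_num]
  field_simp
  ring

/-- For positive solutions of the q-Painlevé I recurrence, the quantity
`v n := y (n+2) * y (n+1)^2 * y n / (y (n+1) + 1)` satisfies `v (n+1) = c₁ * v n`,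
where `c₁ := y 3 * (1/y 1 + 1) / (y 0 * (1/y 2 + 1))`. -/
theorem qPI_v_recursion
    (y : ℤ → ℝ) (hy : ∀ n : ℤ, 0 < y n)
    (hrec : ∀ n : ℤ,
      y (n + 4) * y n * (1 / y (n + 2) + 1) ^ 2 = (y (n + 3) + 1) * (y (n + 1) + 1))
    (c₁ : ℝ) (hc₁ : c₁ = y 3 * (1 / y 1 + 1) / (y 0 * (1 / y 2 + 1)))
    (v : ℤ → ℝ) (hv : ∀ n : ℤ, v n = y (n + 2) * (y (n + 1)) ^ 2 * y n / (y (n + 1) + 1)) :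
    ∀ n : ℤ, v (n + 1) = c₁ * v n := by
  obtain rfl : v = qPIv y := funext hv
  rw [hc₁, ← qPIv_one_div_qPIv_zero hy]
  exact apply_add_one_eq_mul_of_mul_eq_sq (fun n => (qPIv_pos hy n).ne')
    (qPIv_add_two_mul_eq_sq hy hrec)
end

section
/- Let x : ℤ → ℝ be a sequence of positive reals satisfying x_{n+5} x_n = x_{n+3} x_{n+2} + x_{n+4} x_{n+1} for all n ∈ ℤ. Define y_n := x_{n+3} x_n / (x_{n+2} x_{n+1}). Then y satisfies the q-Painlevé II recurrence: for all n ∈ ℤ, y_{n+5} y_n (1/y_{n+3} + 1)(1/y_{n+2} + 1) = (y_{n+4} + 1)(y_{n+1} + 1). -/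
/-- If positive `x : ℤ → ℝ` satisfies the q-PII bilinear equation, then
`y n := x (n+3) * x n / (x (n+2) * x (n+1))` satisfies the q-Painlevé II
recurrence. -/
theorem qPII_bilinear_to_recurrence
    (x : ℤ → ℝ) (hx : ∀ n : ℤ, 0 < x n)
    (hbil : ∀ n : ℤ, x (n + 5) * x n = x (n + 3) * x (n + 2) + x (n + 4) * x (n + 1))
    (y : ℤ → ℝ) (hy : ∀ n : ℤ, y n = x (n + 3) * x n / (x (n + 2) * x (n + 1))) :
    ∀ n : ℤ,
      y (n + 5) * y n * (1 / y (n + 3) + 1) * (1 / y (n + 2) + 1) =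
        (y (n + 4) + 1) * (y (n + 1) + 1) := by
  intro n
  have p0 : x n ≠ 0 := (hx n).ne'
  have p1 : x (n + 1) ≠ 0 := (hx _).ne'
  have p2 : x (n + 2) ≠ 0 := (hx _).ne'
  have p3 : x (n + 3) ≠ 0 := (hx _).ne'
  have p4 : x (n + 4) ≠ 0 := (hx _).ne'
  have p5 : x (n + 5) ≠ 0 := (hx _).ne'
  have p6 : x (n + 6) ≠ 0 := (hx _).ne'
  have p7 : x (n + 7) ≠ 0 := (hx _).ne'
  have p8 : x (n + 8) ≠ 0 := (hx _).ne'
  have h0 := hbil n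
  have h1 := hbil (n + 1)
  have h2 := hbil (n + 2)
  have h3 := hbil (n + 3)
  rw [hy n, hy (n + 1), hy (n + 2), hy (n + 3), hy (n + 4), hy (n + 5)]
  simp only [show n + 1 + 3 = n + 4 from by ring, show n + 2 + 3 = n + 5 from by ring,
    show n + 3 + 3 = n + 6 from by ring, show n + 4 + 3 = n + 7 from by ring,
    show n + 5 + 3 = n + 8 from by ring, show n + 1 + 2 = n + 3 from by ring,
    show n + 2 + 2 = n + 4 from by ring, show n + 3 + 2 = n + 5 from by ring,
    show n + 4 + 2 = n + 6 from by ring, show n + 5 + 2 = n + 7 from by ring,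
    show n + 1 + 1 = n + 2 from by ring, show n + 2 + 1 = n + 3 from by ring,
    show n + 3 + 1 = n + 4 from by ring, show n + 4 + 1 = n + 5 from by ring,
    show n + 5 + 1 = n + 6 from by ring, show n + 1 + 5 = n + 6 from by ring,
    show n + 2 + 5 = n + 7 from by ring, show n + 3 + 5 = n + 8 from by ring,
    show n + 1 + 4 = n + 5 from by ring, show n + 2 + 4 = n + 6 from by ring,
    show n + 3 + 4 = n + 7 from by ring] at h1 h2 h3 ⊢
  have A1 : x (n + 4) * x (n + 1) / (x (n + 3) * x (n + 2)) + 1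
      = x (n + 5) * x n / (x (n + 3) * x (n + 2)) := by
    field_simp
    linear_combination -h0
  have A2 : x (n + 7) * x (n + 4) / (x (n + 6) * x (n + 5)) + 1
      = x (n + 8) * x (n + 3) / (x (n + 6) * x (n + 5)) := by
    field_simp
    linear_combination -h3
  have A3 : 1 / (x (n + 5) * x (n + 2) / (x (n + 4) * x (n + 3))) + 1
      = x (n + 6) * x (n + 1) / (x (n + 5) * x (n + 2)) := by
    rw [one_div_div]
    field_simp
    linear_combination -h1
  have A4 : 1 / (x (n + 6) * x (n + 3) / (x (n + 5) * x (n + 4))) + 1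
      = x (n + 7) * x (n + 2) / (x (n + 6) * x (n + 3)) := by
    rw [one_div_div]
    field_simp
    linear_combination -h2
  rw [A1, A2, A3, A4, div_mul_div_comm, div_mul_div_comm, div_mul_div_comm,
    div_mul_div_comm, div_eq_div_iff (by simp [p1,p2,p3,p4,p5,p6,p7]) (by simp [p2,p3,p5,p6])]
  ring
end

section
/- Let y : ℤ → ℝ be a sequence of positive reals satisfying the q-Painlevé II recurrence y_{n+5} y_n (1/y_{n+3} + 1)(1/y_{n+2} + 1) = (y_{n+4} + 1)(y_{n+1} + 1) for all n ∈ ℤ. Then the quantity u_n := y_{n+4} (1/y_{n+1} + 1) / (y_n (1/y_{n+3} + 1)) is a conserved quantity, i.e., u_{n+1} = u_n for all n ∈ ℤ. -/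
/-!
Since `y * (1 / y + 1) = y + 1`, cross-multiplying `u (n + 1) = u n` turns the right-hand
side into `(y (n + 4) + 1) * (y (n + 1) + 1)`, and the identity becomes the recurrence itself.
-/

lemma mul_one_div_add_one {K : Type*} [DivisionRing K] {x : K} (hx : x ≠ 0) :
    x * (1 / x + 1) = x + 1 := by
  rw [mul_add, mul_one_div_cancel hx, mul_one, add_comm]

lemma mul_one_div_add_one_ne_zero {K : Type*} [Field K] [LinearOrder K] [IsStrictOrderedRing K]
    {x z : K} (hx : 0 < x) (hz : 0 < z) :
    x * (1 / z + 1) ≠ 0 := by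
  positivity

/-- For positive solutions of the q-Painlevé II recurrence,
`u n := y (n+4) * (1/y (n+1) + 1) / (y n * (1/y (n+3) + 1))` is conserved. -/
theorem qPII_conserved_u
    (y : ℤ → ℝ) (hy : ∀ n : ℤ, 0 < y n)
    (hrec : ∀ n : ℤ,
      y (n + 5) * y n * (1 / y (n + 3) + 1) * (1 / y (n + 2) + 1) =
        (y (n + 4) + 1) * (y (n + 1) + 1)) :
    ∀ n : ℤ,
      y (n + 1 + 4) * (1 / y (n + 1 + 1) + 1) / (y (n + 1) * (1 / y (n + 1 + 3) + 1)) =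
        y (n + 4) * (1 / y (n + 1) + 1) / (y n * (1 / y (n + 3) + 1)) := by
  intro n
  rw [show n + 1 + 4 = n + 5 by ring, show n + 1 + 1 = n + 2 by ring,
    show n + 1 + 3 = n + 4 by ring,
    div_eq_div_iff (mul_one_div_add_one_ne_zero (hy _) (hy _))
      (mul_one_div_add_one_ne_zero (hy _) (hy _))]
  calc y (n + 5) * (1 / y (n + 2) + 1) * (y n * (1 / y (n + 3) + 1))
      = (y (n + 4) + 1) * (y (n + 1) + 1) := by linear_combination hrec n
    _ = y (n + 4) * (1 / y (n + 1) + 1) * (y (n + 1) * (1 / y (n + 4) + 1)) := by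
      rw [← mul_one_div_add_one (hy (n + 4)).ne', ← mul_one_div_add_one (hy (n + 1)).ne']
      ring
end

section
/- Let y : ℤ → ℝ be a sequence of positive reals satisfying the q-Painlevé II recurrence y_{n+5} y_n (1/y_{n+3} + 1)(1/y_{n+2} + 1) = (y_{n+4} + 1)(y_{n+1} + 1) for all n ∈ ℤ. Define c := y_4 (1/y_1 + 1) / (y_0 (1/y_3 + 1)) and v_n := y_{n+2} y_n / (1/y_{n+1} + 1). Then v_{n+2} = c v_n for all n ∈ ℤ. -/
/-!
Writing `1 / y + 1 = (y + 1) / y`, the recurrence says exactly that the ratio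
`w m = y (m+4) (1/y (m+1) + 1) / (y m (1/y (m+3) + 1))` satisfies `w (m+1) = w m`; hence `w` is the
constant `w 0 = c`. For every `y`, `v (n+2) = w n * v n` is an algebraic identity.
-/

def IsQPIISolution (y : ℤ → ℝ) : Prop :=
  ∀ n : ℤ, y (n + 5) * y n * (1 / y (n + 3) + 1) * (1 / y (n + 2) + 1) =
    (y (n + 4) + 1) * (y (n + 1) + 1)

noncomputable def qPIIRatio (y : ℤ → ℝ) (m : ℤ) : ℝ :=
  y (m + 4) * (1 / y (m + 1) + 1) / (y m * (1 / y (m + 3) + 1))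

noncomputable def qPIIV (y : ℤ → ℝ) (n : ℤ) : ℝ :=
  y (n + 2) * y n / (1 / y (n + 1) + 1)

section

variable {y : ℤ → ℝ} (hy : ∀ n, y n ≠ 0) (hy1 : ∀ n, 1 + y n ≠ 0)
include hy hy1

theorem qPIIRatio_succ
    (hrec : IsQPIISolution y) (m : ℤ) : qPIIRatio y (m + 1) = qPIIRatio y m := by
  have h := hrec m
  unfold qPIIRatio
  rw [show m + 1 + 4 = m + 5 by ring, show m + 1 + 1 = m + 2 by ring,
    show m + 1 + 3 = m + 4 by ring]
  field_simp [hy, hy1] at h ⊢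
  linear_combination h

theorem qPIIRatio_eq_qPIIRatio_zero
    (hrec : IsQPIISolution y) (m : ℤ) : qPIIRatio y m = qPIIRatio y 0 := by
  simpa using (Function.Periodic.int_mul_eq (qPIIRatio_succ hy hy1 hrec) m)

theorem qPIIV_add_two (n : ℤ) : qPIIV y (n + 2) = qPIIRatio y n * qPIIV y n := by
  unfold qPIIV qPIIRatio
  rw [show n + 2 + 2 = n + 4 by ring, show n + 2 + 1 = n + 3 by ring]
  field_simp [hy, hy1]

end

/-- For positive solutions of the q-Painlevé II recurrence, the quantity
`v n := y (n+2) * y n / (1/y (n+1) + 1)` satisfies `v (n+2) = c * v n`, where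
`c := y 4 * (1/y 1 + 1) / (y 0 * (1/y 3 + 1))`. -/
theorem qPII_v_recursion
    (y : ℤ → ℝ) (hy : ∀ n : ℤ, 0 < y n)
    (hrec : ∀ n : ℤ,
      y (n + 5) * y n * (1 / y (n + 3) + 1) * (1 / y (n + 2) + 1) =
        (y (n + 4) + 1) * (y (n + 1) + 1))
    (c : ℝ) (hc : c = y 4 * (1 / y 1 + 1) / (y 0 * (1 / y 3 + 1)))
    (v : ℤ → ℝ) (hv : ∀ n : ℤ, v n = y (n + 2) * y n / (1 / y (n + 1) + 1)) :
    ∀ n : ℤ, v (n + 2) = c * v n := by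
  intro n
  have hy0 n : y n ≠ 0 := (hy n).ne'
  have hy1 n : 1 + y n ≠ 0 := (add_pos one_pos (hy n)).ne'
  have hc' : c = qPIIRatio y n := by
    rw [qPIIRatio_eq_qPIIRatio_zero hy0 hy1 hrec, hc]
    norm_num [qPIIRatio]
  obtain rfl : v = qPIIV y := funext hv
  rw [hc']
  exact qPIIV_add_two hy0 hy1 n
end

section
/- Let y, z : ℤ → ℝ be sequences of positive reals satisfying the coupled q-Painlevé III recurrences y_{n+3} z_n (1/z_{n+2} + 1)(1/y_{n+1} + 1) = (y_{n+2} + 1)(z_{n+1} + 1) and z_{n+3} y_n (1/y_{n+2} + 1)(1/z_{n+1} + 1) = (z_{n+2} + 1)(y_{n+1} + 1) for all n ∈ ℤ. Then the quantity u_n := y_{n+2} (1/z_{n+1} + 1) / (z_n (1/y_{n+1} + 1)) is a conserved quantity, i.e., u_{n+1} = u_n for all n ∈ ℤ. -/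
/-!
Write `u n = N n / D n` with `D n = z n * (1 / y (n+1) + 1)`. The first recurrence says exactly
`y (n+3) * (1 / z (n+2) + 1) = (y (n+2) + 1) * (z (n+1) + 1) / D n`, so
`u (n+1) = (y (n+2) + 1) / (1 / y (n+2) + 1) * ((z (n+1) + 1) / z (n+1)) / D n`, and the identities
`(a + 1) / (1 / a + 1) = a` and `(a + 1) / a = 1 / a + 1` turn this back into `u n`.
-/

theorem add_one_div_one_div_add_one {K : Type*} [Field K] {a : K} (ha : a ≠ 0)
    (ha₁ : a + 1 ≠ 0) : (a + 1) / (1 / a + 1) = a := by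
  rw [← div_add_same ha, add_comm 1 a, div_div_cancel₀ ha₁]

theorem add_one_div_self {K : Type*} [Field K] {a : K} (ha : a ≠ 0) :
    (a + 1) / a = 1 / a + 1 := by
  rw [add_comm a 1, div_add_same ha]

theorem qPIII_conserved_u_general
    (y z : ℤ → ℝ) (hy : ∀ n : ℤ, 0 < y n) (hz : ∀ n : ℤ, 0 < z n)
    (hrec₁ : ∀ n : ℤ,
      y (n + 3) * z n * (1 / z (n + 2) + 1) * (1 / y (n + 1) + 1) =
        (y (n + 2) + 1) * (z (n + 1) + 1)) :
    ∀ n : ℤ,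
      y (n + 1 + 2) * (1 / z (n + 1 + 1) + 1) / (z (n + 1) * (1 / y (n + 1 + 1) + 1)) =
        y (n + 2) * (1 / z (n + 1) + 1) / (z n * (1 / y (n + 1) + 1)) := by
  intro n
  have hy₁ := hy (n + 1)
  have hy₂ := hy (n + 2)
  have hz₀ := hz n
  have hz₁ := hz (n + 1)
  have hnum : y (n + 3) * (1 / z (n + 2) + 1) =
      (y (n + 2) + 1) * (z (n + 1) + 1) / (z n * (1 / y (n + 1) + 1)) := by
    rw [eq_div_iff (by positivity)]
    linear_combination hrec₁ n
  rw [show n + 1 + 2 = n + 3 by ring, show n + 1 + 1 = n + 2 by ring, hnum]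
  calc (y (n + 2) + 1) * (z (n + 1) + 1) / (z n * (1 / y (n + 1) + 1)) /
        (z (n + 1) * (1 / y (n + 2) + 1))
      = (y (n + 2) + 1) / (1 / y (n + 2) + 1) * ((z (n + 1) + 1) / z (n + 1)) /
          (z n * (1 / y (n + 1) + 1)) := by
        rw [div_div, div_mul_div_comm, div_div]
        congr 1
        ring
    _ = y (n + 2) * (1 / z (n + 1) + 1) / (z n * (1 / y (n + 1) + 1)) := by
      rw [add_one_div_one_div_add_one hy₂.ne' (by positivity), add_one_div_self hz₁.ne']

/-- For positive solutions of the coupled q-Painlevé III recurrences,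
`u n := y (n+2) * (1/z (n+1) + 1) / (z n * (1/y (n+1) + 1))` is conserved. -/
theorem qPIII_conserved_u
    (y z : ℤ → ℝ) (hy : ∀ n : ℤ, 0 < y n) (hz : ∀ n : ℤ, 0 < z n)
    (hrec₁ : ∀ n : ℤ,
      y (n + 3) * z n * (1 / z (n + 2) + 1) * (1 / y (n + 1) + 1) =
        (y (n + 2) + 1) * (z (n + 1) + 1))
    (hrec₂ : ∀ n : ℤ,
      z (n + 3) * y n * (1 / y (n + 2) + 1) * (1 / z (n + 1) + 1) =
        (z (n + 2) + 1) * (y (n + 1) + 1)) :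
    ∀ n : ℤ,
      y (n + 1 + 2) * (1 / z (n + 1 + 1) + 1) / (z (n + 1) * (1 / y (n + 1 + 1) + 1)) =
        y (n + 2) * (1 / z (n + 1) + 1) / (z n * (1 / y (n + 1) + 1)) :=
  qPIII_conserved_u_general y z hy hz hrec₁
end

section
/- Let y, z : ℤ → ℝ be sequences of positive reals satisfying the coupled q-Painlevé III recurrences y_{n+3} z_n (1/z_{n+2} + 1)(1/y_{n+1} + 1) = (y_{n+2} + 1)(z_{n+1} + 1) and z_{n+3} y_n (1/y_{n+2} + 1)(1/z_{n+1} + 1) = (z_{n+2} + 1)(y_{n+1} + 1) for all n ∈ ℤ. Then the quantity v_n := z_{n+2} (1/y_{n+1} + 1) / (y_n (1/z_{n+1} + 1)) is a conserved quantity, i.e., v_{n+1} = v_n for all n ∈ ℤ. -/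
/-!
Since `x + 1 = x (1/x + 1)`, the second recurrence at `n` reads
`z_{n+3} (1/y_{n+2} + 1) · y_n (1/z_{n+1} + 1) = z_{n+2} (1/y_{n+1} + 1) · y_{n+1} (1/z_{n+2} + 1)`,
which after division is exactly `v_{n+1} = v_n`.
-/

theorem add_one_eq_mul_one_div_add_one {K : Type*} [DivisionRing K] {x : K} (hx : x ≠ 0) :
    x + 1 = x * (1 / x + 1) := by
  rw [mul_add, mul_one_div_cancel hx, mul_one, add_comm]

theorem qPIII_v_step {K : Type*} [Field K] {y₀ y₁ y₂ z₁ z₂ z₃ : K}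
    (hy₀ : y₀ ≠ 0) (hy₁ : y₁ ≠ 0) (hz₂ : z₂ ≠ 0)
    (hz₁' : 1 / z₁ + 1 ≠ 0) (hz₂' : 1 / z₂ + 1 ≠ 0)
    (hrec : z₃ * y₀ * (1 / y₂ + 1) * (1 / z₁ + 1) = (z₂ + 1) * (y₁ + 1)) :
    z₃ * (1 / y₂ + 1) / (y₁ * (1 / z₂ + 1)) = z₂ * (1 / y₁ + 1) / (y₀ * (1 / z₁ + 1)) := by
  rw [div_eq_div_iff (mul_ne_zero hy₁ hz₂') (mul_ne_zero hy₀ hz₁')]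
  rw [add_one_eq_mul_one_div_add_one hz₂, add_one_eq_mul_one_div_add_one hy₁] at hrec
  linear_combination hrec

theorem qPIII_conserved_v_general
    (y z : ℤ → ℝ) (hy : ∀ n : ℤ, 0 < y n) (hz : ∀ n : ℤ, 0 < z n)
    (hrec₂ : ∀ n : ℤ,
      z (n + 3) * y n * (1 / y (n + 2) + 1) * (1 / z (n + 1) + 1) =
        (z (n + 2) + 1) * (y (n + 1) + 1)) :
    ∀ n : ℤ,
      z (n + 1 + 2) * (1 / y (n + 1 + 1) + 1) / (y (n + 1) * (1 / z (n + 1 + 1) + 1)) =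
        z (n + 2) * (1 / y (n + 1) + 1) / (y n * (1 / z (n + 1) + 1)) := by
  intro n
  rw [show n + 1 + 2 = n + 3 by ring, show n + 1 + 1 = n + 2 by ring]
  have one_div_add_one_pos (k : ℤ) : 0 < 1 / z k + 1 := add_pos (one_div_pos.2 (hz k)) one_pos
  exact qPIII_v_step (hy n).ne' (hy (n + 1)).ne' (hz (n + 2)).ne'
    (one_div_add_one_pos (n + 1)).ne' (one_div_add_one_pos (n + 2)).ne' (hrec₂ n)

/-- For positive solutions of the coupled q-Painlevé III recurrences,
`v n := z (n+2) * (1/y (n+1) + 1) / (y n * (1/z (n+1) + 1))` is conserved. -/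
theorem qPIII_conserved_v
    (y z : ℤ → ℝ) (hy : ∀ n : ℤ, 0 < y n) (hz : ∀ n : ℤ, 0 < z n)
    (hrec₁ : ∀ n : ℤ,
      y (n + 3) * z n * (1 / z (n + 2) + 1) * (1 / y (n + 1) + 1) =
        (y (n + 2) + 1) * (z (n + 1) + 1))
    (hrec₂ : ∀ n : ℤ,
      z (n + 3) * y n * (1 / y (n + 2) + 1) * (1 / z (n + 1) + 1) =
        (z (n + 2) + 1) * (y (n + 1) + 1)) :
    ∀ n : ℤ,
      z (n + 1 + 2) * (1 / y (n + 1 + 1) + 1) / (y (n + 1) * (1 / z (n + 1 + 1) + 1)) =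
        z (n + 2) * (1 / y (n + 1) + 1) / (y n * (1 / z (n + 1) + 1)) :=
  qPIII_conserved_v_general y z hy hz hrec₂
end

section
/- Let y, z : ℤ → ℝ be sequences of positive reals satisfying the coupled q-Painlevé III recurrences y_{n+3} z_n (1/z_{n+2} + 1)(1/y_{n+1} + 1) = (y_{n+2} + 1)(z_{n+1} + 1) and z_{n+3} y_n (1/y_{n+2} + 1)(1/z_{n+1} + 1) = (z_{n+2} + 1)(y_{n+1} + 1) for all n ∈ ℤ. Define t_n := y_n z_n, u₀ := y_2 (1/z_1 + 1) / (z_0 (1/y_1 + 1)) and v₀ := z_2 (1/y_1 + 1) / (y_0 (1/z_1 + 1)). Then t_{n+2} = u₀ v₀ t_n for all n ∈ ℤ. -/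
/-!
Multiplying the two recurrences and using `x * (1 / x + 1) = x + 1`, every factor `1 / x + 1`
cancels and `t = y z` satisfies `t (n + 3) t n = t (n + 2) t (n + 1)`. Hence the ratio
`t (n + 2) / t n` is `1`-periodic on `ℤ`, so it equals `t 2 / t 0`, which is `u₀ v₀`.
-/

theorem qPIII_prod_add_three_mul {K : Type*} [Field K] {y z : ℤ → K}
    (hy : ∀ n, y n ≠ 0) (hz : ∀ n, z n ≠ 0) (hy₁ : ∀ n, y n + 1 ≠ 0) (hz₁ : ∀ n, z n + 1 ≠ 0)
    (hrec₁ : ∀ n : ℤ,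
      y (n + 3) * z n * (1 / z (n + 2) + 1) * (1 / y (n + 1) + 1) =
        (y (n + 2) + 1) * (z (n + 1) + 1))
    (hrec₂ : ∀ n : ℤ,
      z (n + 3) * y n * (1 / y (n + 2) + 1) * (1 / z (n + 1) + 1) =
        (z (n + 2) + 1) * (y (n + 1) + 1))
    (n : ℤ) :
    y (n + 3) * z (n + 3) * (y n * z n) = y (n + 2) * z (n + 2) * (y (n + 1) * z (n + 1)) := by
  have h₁ := hrec₁ n
  have h₂ := hrec₂ n
  field_simp [hy, hz] at h₁ h₂
  refine mul_right_cancel₀ (mul_ne_zero (mul_ne_zero (hy₁ (n + 1)) (hy₁ (n + 2)))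
    (mul_ne_zero (hz₁ (n + 1)) (hz₁ (n + 2)))) ?_
  linear_combination congr($h₁ * $h₂)

theorem eq_div_mul_of_mul_add_three {G₀ : Type*} [CommGroupWithZero G₀] {t : ℤ → G₀}
    (ht : ∀ n, t n ≠ 0) (h : ∀ n, t (n + 3) * t n = t (n + 2) * t (n + 1)) (n : ℤ) :
    t (n + 2) = t 2 / t 0 * t n := by
  have hper : Function.Periodic (fun n => t (n + 2) / t n) 1 := by
    intro n
    rw [div_eq_div_iff (ht _) (ht _), add_right_comm, show n + 2 + 1 = n + 3 by ring, h]
  have hconst := hper.int_mul_eq n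
  simp only [Int.cast_id, mul_one, zero_add] at hconst
  rw [← hconst, div_mul_cancel₀ _ (ht n)]

/-- For positive solutions of the coupled q-Painlevé III recurrences, the
quantity `t n := y n * z n` satisfies `t (n+2) = u₀ * v₀ * t n`, where
`u₀ := y 2 * (1/z 1 + 1) / (z 0 * (1/y 1 + 1))` and
`v₀ := z 2 * (1/y 1 + 1) / (y 0 * (1/z 1 + 1))`. -/
theorem qPIII_t_recursion
    (y z : ℤ → ℝ) (hy : ∀ n : ℤ, 0 < y n) (hz : ∀ n : ℤ, 0 < z n)
    (hrec₁ : ∀ n : ℤ,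
      y (n + 3) * z n * (1 / z (n + 2) + 1) * (1 / y (n + 1) + 1) =
        (y (n + 2) + 1) * (z (n + 1) + 1))
    (hrec₂ : ∀ n : ℤ,
      z (n + 3) * y n * (1 / y (n + 2) + 1) * (1 / z (n + 1) + 1) =
        (z (n + 2) + 1) * (y (n + 1) + 1))
    (u₀ v₀ : ℝ)
    (hu₀ : u₀ = y 2 * (1 / z 1 + 1) / (z 0 * (1 / y 1 + 1)))
    (hv₀ : v₀ = z 2 * (1 / y 1 + 1) / (y 0 * (1 / z 1 + 1)))
    (t : ℤ → ℝ) (ht : ∀ n : ℤ, t n = y n * z n) :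
    ∀ n : ℤ, t (n + 2) = u₀ * v₀ * t n := by
  obtain rfl : t = fun n => y n * z n := funext ht
  have hy₀ (n : ℤ) : y n ≠ 0 := (hy n).ne'
  have hz₀ (n : ℤ) : z n ≠ 0 := (hz n).ne'
  have huv : u₀ * v₀ = y 2 * z 2 / (y 0 * z 0) := by
    have hy₁ := (add_pos (one_div_pos.2 (hy 1)) one_pos).ne'
    have hz₁ := (add_pos (one_div_pos.2 (hz 1)) one_pos).ne'
    rw [hu₀, hv₀]
    field_simp
  rw [huv]
  refine eq_div_mul_of_mul_add_three (fun n => mul_ne_zero (hy₀ n) (hz₀ n)) ?_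
  exact qPIII_prod_add_three_mul hy₀ hz₀ (fun n => (add_pos (hy n) one_pos).ne')
    (fun n => (add_pos (hz n) one_pos).ne') hrec₁ hrec₂
end

section
/- Let y, z, Y, Z : ℤ → ℝ be sequences of positive reals satisfying the coupled q-Painlevé VI recurrences: for all n ∈ ℤ, y_{n+2} Z_n (1/z_{n+1}+1)(1/Y_{n+1}+1) = (y_{n+1}+1)(Z_{n+1}+1), z_{n+2} Y_n (1/y_{n+1}+1)(1/Z_{n+1}+1) = (z_{n+1}+1)(Y_{n+1}+1), Y_{n+2} z_n (1/Z_{n+1}+1)(1/y_{n+1}+1) = (Y_{n+1}+1)(z_{n+1}+1), and Z_{n+2} y_n (1/Y_{n+1}+1)(1/z_{n+1}+1) = (Z_{n+1}+1)(y_{n+1}+1). Define P_n := y_n z_n Y_n Z_n. Then P_{n+2} P_n = P_{n+1}^2 for all n ∈ ℤ. -/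
/-!
Multiply the four recurrences at step `n`. Each of `y, z, Y, Z` contributes one factor
`(x + 1)` twice on the right, while on the left the four factors `1 / x + 1 = (x + 1) / x`
each appear twice, so with `Q := ∏ (x_{n+1} + 1)` the product reads
`P_{n+2} P_n (Q / P_{n+1})² = Q²`. Cancelling `Q² ≠ 0` gives the claim.
-/

section

variable {K : Type*} [Field K]

lemma one_div_add_one_mul₄ {a b c d : K} (ha : a ≠ 0) (hb : b ≠ 0) (hc : c ≠ 0) (hd : d ≠ 0) :
    (1 / a + 1) * (1 / b + 1) * (1 / c + 1) * (1 / d + 1) =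
      (a + 1) * (b + 1) * (c + 1) * (d + 1) / (a * b * c * d) := by
  field_simp
  ring

lemma mul_eq_sq_of_mul_mul_div_sq_eq_sq {p₀ p₁ p₂ q : K} (hp₁ : p₁ ≠ 0) (hq : q ≠ 0)
    (h : p₂ * p₀ * (q / p₁) ^ 2 = q ^ 2) : p₂ * p₀ = p₁ ^ 2 := by
  rw [div_pow, mul_div_assoc', div_eq_iff (pow_ne_zero 2 hp₁)] at h
  exact mul_right_cancel₀ (pow_ne_zero 2 hq) (by rw [h, mul_comm])

theorem qPVI_product_step (y z Y Z : ℤ → K) (n : ℤ)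
    (hy : y (n + 1) ≠ 0) (hz : z (n + 1) ≠ 0) (hY : Y (n + 1) ≠ 0) (hZ : Z (n + 1) ≠ 0)
    (hy' : y (n + 1) + 1 ≠ 0) (hz' : z (n + 1) + 1 ≠ 0)
    (hY' : Y (n + 1) + 1 ≠ 0) (hZ' : Z (n + 1) + 1 ≠ 0)
    (h₁ : y (n + 2) * Z n * (1 / z (n + 1) + 1) * (1 / Y (n + 1) + 1) =
      (y (n + 1) + 1) * (Z (n + 1) + 1))
    (h₂ : z (n + 2) * Y n * (1 / y (n + 1) + 1) * (1 / Z (n + 1) + 1) =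
      (z (n + 1) + 1) * (Y (n + 1) + 1))
    (h₃ : Y (n + 2) * z n * (1 / Z (n + 1) + 1) * (1 / y (n + 1) + 1) =
      (Y (n + 1) + 1) * (z (n + 1) + 1))
    (h₄ : Z (n + 2) * y n * (1 / Y (n + 1) + 1) * (1 / z (n + 1) + 1) =
      (Z (n + 1) + 1) * (y (n + 1) + 1)) :
    (y (n + 2) * z (n + 2) * Y (n + 2) * Z (n + 2)) * (y n * z n * Y n * Z n) =
      (y (n + 1) * z (n + 1) * Y (n + 1) * Z (n + 1)) ^ 2 := by
  set q := (y (n + 1) + 1) * (z (n + 1) + 1) * (Y (n + 1) + 1) * (Z (n + 1) + 1)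
  have hq : q ≠ 0 := mul_ne_zero (mul_ne_zero (mul_ne_zero hy' hz') hY') hZ'
  have hp₁ := mul_ne_zero (mul_ne_zero (mul_ne_zero hy hz) hY) hZ
  refine mul_eq_sq_of_mul_mul_div_sq_eq_sq hp₁ hq ?_
  rw [← one_div_add_one_mul₄ hy hz hY hZ]
  calc _ = (y (n + 2) * Z n * (1 / z (n + 1) + 1) * (1 / Y (n + 1) + 1)) *
        (z (n + 2) * Y n * (1 / y (n + 1) + 1) * (1 / Z (n + 1) + 1)) *
        (Y (n + 2) * z n * (1 / Z (n + 1) + 1) * (1 / y (n + 1) + 1)) *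
        (Z (n + 2) * y n * (1 / Y (n + 1) + 1) * (1 / z (n + 1) + 1)) := by ring
    _ = q ^ 2 := by rw [h₁, h₂, h₃, h₄]; ring

end

/-- For positive solutions of the coupled q-Painlevé VI recurrences, the
product `P n := y n * z n * Y n * Z n` satisfies `P (n+2) * P n = (P (n+1))^2`. -/
theorem qPVI_product_geometric
    (y z Y Z : ℤ → ℝ)
    (hy : ∀ n : ℤ, 0 < y n) (hz : ∀ n : ℤ, 0 < z n)
    (hY : ∀ n : ℤ, 0 < Y n) (hZ : ∀ n : ℤ, 0 < Z n)
    (hrec₁ : ∀ n : ℤ,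
      y (n + 2) * Z n * (1 / z (n + 1) + 1) * (1 / Y (n + 1) + 1) =
        (y (n + 1) + 1) * (Z (n + 1) + 1))
    (hrec₂ : ∀ n : ℤ,
      z (n + 2) * Y n * (1 / y (n + 1) + 1) * (1 / Z (n + 1) + 1) =
        (z (n + 1) + 1) * (Y (n + 1) + 1))
    (hrec₃ : ∀ n : ℤ,
      Y (n + 2) * z n * (1 / Z (n + 1) + 1) * (1 / y (n + 1) + 1) =
        (Y (n + 1) + 1) * (z (n + 1) + 1))
    (hrec₄ : ∀ n : ℤ,
      Z (n + 2) * y n * (1 / Y (n + 1) + 1) * (1 / z (n + 1) + 1) =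
        (Z (n + 1) + 1) * (y (n + 1) + 1))
    (P : ℤ → ℝ) (hP : ∀ n : ℤ, P n = y n * z n * Y n * Z n) :
    ∀ n : ℤ, P (n + 2) * P n = (P (n + 1)) ^ 2 := by
  intro n
  rw [hP, hP, hP]
  exact qPVI_product_step y z Y Z n (hy _).ne' (hz _).ne' (hY _).ne' (hZ _).ne'
    (add_pos (hy _) one_pos).ne' (add_pos (hz _) one_pos).ne'
    (add_pos (hY _) one_pos).ne' (add_pos (hZ _) one_pos).ne'
    (hrec₁ n) (hrec₂ n) (hrec₃ n) (hrec₄ n)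
end

section
/- Let y, z, Y, Z : ℤ → ℝ be sequences of positive reals satisfying the coupled q-Painlevé VI recurrences: for all n ∈ ℤ, y_{n+2} Z_n (1/z_{n+1}+1)(1/Y_{n+1}+1) = (y_{n+1}+1)(Z_{n+1}+1), z_{n+2} Y_n (1/y_{n+1}+1)(1/Z_{n+1}+1) = (z_{n+1}+1)(Y_{n+1}+1), Y_{n+2} z_n (1/Z_{n+1}+1)(1/y_{n+1}+1) = (Y_{n+1}+1)(z_{n+1}+1), and Z_{n+2} y_n (1/Y_{n+1}+1)(1/z_{n+1}+1) = (Z_{n+1}+1)(y_{n+1}+1). Then for all n ∈ ℤ: y_{n+2} z_{n+2} Y_n Z_n = y_{n+1} z_{n+1} Y_{n+1} Z_{n+1} and y_{n+2} Y_{n+2} z_n Z_n = y_{n+1} z_{n+1} Y_{n+1} Z_{n+1}. -/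
/-- For positive solutions of the coupled q-Painlevé VI recurrences:
`y (n+2) * z (n+2) * Y n * Z n = y (n+1) * z (n+1) * Y (n+1) * Z (n+1)` and
`y (n+2) * Y (n+2) * z n * Z n = y (n+1) * z (n+1) * Y (n+1) * Z (n+1)`. -/
theorem qPVI_pair_products
    (y z Y Z : ℤ → ℝ)
    (hy : ∀ n : ℤ, 0 < y n) (hz : ∀ n : ℤ, 0 < z n)
    (hY : ∀ n : ℤ, 0 < Y n) (hZ : ∀ n : ℤ, 0 < Z n)
    (hrec₁ : ∀ n : ℤ,
      y (n + 2) * Z n * (1 / z (n + 1) + 1) * (1 / Y (n + 1) + 1) =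
        (y (n + 1) + 1) * (Z (n + 1) + 1))
    (hrec₂ : ∀ n : ℤ,
      z (n + 2) * Y n * (1 / y (n + 1) + 1) * (1 / Z (n + 1) + 1) =
        (z (n + 1) + 1) * (Y (n + 1) + 1))
    (hrec₃ : ∀ n : ℤ,
      Y (n + 2) * z n * (1 / Z (n + 1) + 1) * (1 / y (n + 1) + 1) =
        (Y (n + 1) + 1) * (z (n + 1) + 1))
    (hrec₄ : ∀ n : ℤ,
      Z (n + 2) * y n * (1 / Y (n + 1) + 1) * (1 / z (n + 1) + 1) =
        (Z (n + 1) + 1) * (y (n + 1) + 1)) :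
    ∀ n : ℤ,
      (y (n + 2) * z (n + 2) * Y n * Z n =
        y (n + 1) * z (n + 1) * Y (n + 1) * Z (n + 1)) ∧
      (y (n + 2) * Y (n + 2) * z n * Z n =
        y (n + 1) * z (n + 1) * Y (n + 1) * Z (n + 1)) := by
  intro n
  have h1 := hrec₁ n
  have h2 := hrec₂ n
  have h3 := hrec₃ n
  have ha := (hy (n+1)).ne'
  have hb := (hz (n+1)).ne'
  have hc := (hY (n+1)).ne'
  have hd := (hZ (n+1)).ne'
  field_simp at h1 h2 h3
  have hP : ((1 + y (n+1)) * (1 + z (n+1)) * (1 + Y (n+1)) * (1 + Z (n+1))) ≠ 0 := by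
    have := hy (n+1); have := hz (n+1); have := hY (n+1); have := hZ (n+1); positivity
  constructor
  · apply mul_left_cancel₀ hP
    linear_combination (z (n+2) * Y n * (1 + y (n+1)) * (1 + Z (n+1))) * h1 +
      ((y (n+1) + 1) * (Z (n+1) + 1) * (z (n+1) * Y (n+1))) * h2
  · apply mul_left_cancel₀ hP
    linear_combination (Y (n+2) * z n * (1 + Z (n+1)) * (1 + y (n+1))) * h1 +
      ((y (n+1) + 1) * (Z (n+1) + 1) * (z (n+1) * Y (n+1))) * h3
end
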